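/- arXiv:1201.2732 — 2 statements merged into one kernel-verified Lean document; each statement's English description precedes it below -/
import Mathlib

section
/- Let k ≥ 2 be an integer and define f : ℝ → ℝ by f(ρ) = (1 + cosh ρ)^{-(k-1)}. Then for every ρ > 0 and every real u with 0 ≤ u ≤ 1, one has k·f'(ρ)·coth ρ - u·(f'(ρ)·coth ρ - f''(ρ)) ≤ -k(k-1)/(1 + cosh ρ)^k, and equality holds if and only if u = 1. -/
/-!
Write `A = 1 + cosh ρ` and `f = A^{-n}` with `n = k - 1`. Then `f' coth ρ = -n cosh ρ / A^{n+1}`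
and, since `sinh² ρ = (cosh ρ - 1) A`, `f' coth ρ - f'' = -n (n+1) (cosh ρ - 1) / A^{n+1}`.
Hence the expression equals `-k(k-1)/A^k - (1-u) k(k-1)(cosh ρ - 1)/A^k`, and
`cosh ρ > 1` for `ρ > 0`.
-/

open Real

lemma one_add_cosh_pos (ρ : ℝ) : 0 < 1 + cosh ρ := by linarith [cosh_pos ρ]

lemma hasDerivAt_inv_one_add_cosh_pow (n : ℕ) (ρ : ℝ) :
    HasDerivAt (fun ρ => ((1 + cosh ρ) ^ n)⁻¹) (-n * sinh ρ / (1 + cosh ρ) ^ (n + 1)) ρ := by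
  have hA := (one_add_cosh_pos ρ).ne'
  refine ((((hasDerivAt_cosh ρ).const_add 1).fun_pow n).fun_inv
    (pow_ne_zero n hA)).congr_deriv ?_
  rcases n with _ | n
  · simp
  · rw [Nat.add_sub_cancel]
    field_simp
    ring

lemma hasDerivAt_sinh_div_one_add_cosh_pow (n : ℕ) (ρ : ℝ) :
    HasDerivAt (fun ρ => sinh ρ / (1 + cosh ρ) ^ n)
      (cosh ρ / (1 + cosh ρ) ^ n - n * sinh ρ ^ 2 / (1 + cosh ρ) ^ (n + 1)) ρ := by
  have hA := (one_add_cosh_pos ρ).ne'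
  refine ((hasDerivAt_sinh ρ).fun_div (((hasDerivAt_cosh ρ).const_add 1).fun_pow n)
    (pow_ne_zero n hA)).congr_deriv ?_
  rcases n with _ | n
  · simp
  · rw [Nat.add_sub_cancel]
    field_simp
    ring

lemma deriv_inv_one_add_cosh_pow (n : ℕ) :
    deriv (fun ρ => ((1 + cosh ρ) ^ n)⁻¹) = fun ρ => -n * (sinh ρ / (1 + cosh ρ) ^ (n + 1)) :=
  funext fun ρ => by rw [(hasDerivAt_inv_one_add_cosh_pow n ρ).deriv]; ring

lemma deriv_deriv_inv_one_add_cosh_pow (n : ℕ) (ρ : ℝ) :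
    deriv (deriv (fun ρ => ((1 + cosh ρ) ^ n)⁻¹)) ρ =
      -n * (cosh ρ / (1 + cosh ρ) ^ (n + 1)
        - (n + 1 : ℕ) * sinh ρ ^ 2 / (1 + cosh ρ) ^ (n + 1 + 1)) := by
  rw [deriv_inv_one_add_cosh_pow]
  exact ((hasDerivAt_sinh_div_one_add_cosh_pow (n + 1) ρ).const_mul _).deriv

lemma sinh_sq_eq_mul_one_add_cosh (ρ : ℝ) : sinh ρ ^ 2 = (cosh ρ - 1) * (1 + cosh ρ) := by
  nlinarith [cosh_sq ρ]

lemma deriv_inv_one_add_cosh_pow_mul_coth (n : ℕ) {ρ : ℝ} (hρ : ρ ≠ 0) :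
    deriv (fun ρ => ((1 + cosh ρ) ^ n)⁻¹) ρ * (cosh ρ / sinh ρ) =
      -n * cosh ρ / (1 + cosh ρ) ^ (n + 1) := by
  have hs : sinh ρ ≠ 0 := sinh_ne_zero.mpr hρ
  rw [deriv_inv_one_add_cosh_pow]
  field_simp

lemma deriv_mul_coth_sub_deriv_deriv_inv_one_add_cosh_pow (n : ℕ) {ρ : ℝ} (hρ : ρ ≠ 0) :
    deriv (fun ρ => ((1 + cosh ρ) ^ n)⁻¹) ρ * (cosh ρ / sinh ρ)
        - deriv (deriv (fun ρ => ((1 + cosh ρ) ^ n)⁻¹)) ρ =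
      -(n * (n + 1)) * (cosh ρ - 1) / (1 + cosh ρ) ^ (n + 1) := by
  have hA := (one_add_cosh_pos ρ).ne'
  rw [deriv_inv_one_add_cosh_pow_mul_coth n hρ, deriv_deriv_inv_one_add_cosh_pow,
    sinh_sq_eq_mul_one_add_cosh]
  push_cast
  field_simp
  ring

lemma sub_one_sub_mul_le_self_and_eq_iff {a b u : ℝ} (hb : 0 < b) (hu : u ≤ 1) :
    a - (1 - u) * b ≤ a ∧ (a - (1 - u) * b = a ↔ u = 1) := by
  refine ⟨by nlinarith, fun h => ?_, fun h => by simp [h]⟩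
  have : (1 - u) * b = 0 := by linarith
  rcases mul_eq_zero.mp this with h1 | h1 <;> linarith

/-- For an integer `k ≥ 2` and `f ρ = (1 + cosh ρ)^{-(k-1)}`, for every `ρ > 0` and every
`u ∈ [0,1]`, `k·f'(ρ)·coth ρ - u·(f'(ρ)·coth ρ - f''(ρ)) ≤ -k(k-1)/(1+cosh ρ)^k`, with
equality if and only if `u = 1`. Here `coth ρ = cosh ρ / sinh ρ`. -/
theorem stmt3 (k : ℕ) (hk : 2 ≤ k) (f : ℝ → ℝ)
    (hf : ∀ ρ : ℝ, f ρ = ((1 + Real.cosh ρ) ^ (k - 1))⁻¹) :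
    ∀ ρ : ℝ, 0 < ρ → ∀ u : ℝ, 0 ≤ u → u ≤ 1 →
      ((k : ℝ) * deriv f ρ * (Real.cosh ρ / Real.sinh ρ)
          - u * (deriv f ρ * (Real.cosh ρ / Real.sinh ρ) - deriv (deriv f) ρ)
        ≤ -((k : ℝ) * ((k : ℝ) - 1)) / (1 + Real.cosh ρ) ^ k) ∧
      ((k : ℝ) * deriv f ρ * (Real.cosh ρ / Real.sinh ρ)
          - u * (deriv f ρ * (Real.cosh ρ / Real.sinh ρ) - deriv (deriv f) ρ)
        = -((k : ℝ) * ((k : ℝ) - 1)) / (1 + Real.cosh ρ) ^ k ↔ u = 1) := by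
  intro ρ hρ u _ hu
  obtain ⟨n, rfl⟩ : ∃ n, k = n + 1 := ⟨k - 1, by omega⟩
  obtain rfl : f = fun ρ => ((1 + cosh ρ) ^ n)⁻¹ := funext hf
  have hn : (0 : ℝ) < n := by exact_mod_cast (by omega : 0 < n)
  have hc : 0 < cosh ρ - 1 := sub_pos.mpr (one_lt_cosh.mpr hρ.ne')
  have hA := one_add_cosh_pos ρ
  have key : ((n + 1 : ℕ) : ℝ) * deriv (fun ρ => ((1 + cosh ρ) ^ n)⁻¹) ρ * (cosh ρ / sinh ρ)
        - u * (deriv (fun ρ => ((1 + cosh ρ) ^ n)⁻¹) ρ * (cosh ρ / sinh ρ)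
          - deriv (deriv (fun ρ => ((1 + cosh ρ) ^ n)⁻¹)) ρ) =
      -(((n + 1 : ℕ) : ℝ) * (((n + 1 : ℕ) : ℝ) - 1)) / (1 + cosh ρ) ^ (n + 1)
        - (1 - u) * ((n + 1) * n * (cosh ρ - 1) / (1 + cosh ρ) ^ (n + 1)) := by
    rw [mul_assoc, deriv_mul_coth_sub_deriv_deriv_inv_one_add_cosh_pow n hρ.ne',
      deriv_inv_one_add_cosh_pow_mul_coth n hρ.ne']
    push_cast
    ring
  rw [key]
  exact sub_one_sub_mul_le_self_and_eq_iff (by positivity) hu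
end

section
/- Let k ≥ 2 be an integer and let ω_k denote the volume of the unit ball in ℝ^k. For θ ∈ (0, π/2), define A(θ) = k·ω_k·tan^k θ·∫₀^{π/2 − θ} sin^{k−1} φ dφ and L(θ) = k·ω_k·sin^{k−1} θ. Then k^k·ω_k·A(θ)^{k−1} > L(θ)^k for every θ ∈ (0, π/2). -/
open Real intervalIntegral in
lemma key_int (m : ℕ) (a : ℝ) (ha0 : 0 < a) (ha1 : a < π/2) :
    Real.sin a ^ (m+1) / (m+1) < ∫ φ in (0:ℝ)..a, Real.sin φ ^ m := by
  have hapi : a < π := by linarith [Real.pi_pos]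
  have h1 : (∫ φ in (0:ℝ)..a, Real.sin φ ^ m * Real.cos φ) = Real.sin a ^ (m+1) / (m+1) := by
    have h := @integral_sin_pow_mul_cos_pow_odd 0 a m 0
    simp only [mul_zero, zero_add, pow_one, pow_zero, mul_one, Real.sin_zero] at h
    rw [h, integral_pow]
    simp
  rw [← h1]
  apply integral_lt_integral_of_continuousOn_of_le_of_exists_lt ha0
  · fun_prop
  · fun_prop
  · intro x hx
    have hs : 0 ≤ Real.sin x ^ m :=
      pow_nonneg (Real.sin_nonneg_of_nonneg_of_le_pi hx.1.le (by linarith [hx.2])) m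
    nlinarith [Real.cos_le_one x]
  · refine ⟨a, by simp [ha0.le], ?_⟩
    have hsa : 0 < Real.sin a := Real.sin_pos_of_pos_of_lt_pi ha0 hapi
    have hca : Real.cos a < 1 := by
      have := Real.cos_lt_cos_of_nonneg_of_le_pi (le_refl 0) hapi.le ha0
      simpa using this
    nlinarith [pow_pos hsa m]

lemma aux1 (K w s : ℝ) (m : ℕ) : (K*w*s^m)^(m+1) = (K*w)*((K*w)^m*(s^(m+1))^m) := by ring

lemma aux2 (K w t I : ℝ) (m : ℕ) :
    (K*w)*((K*w)^m*(K*t^(m+1)*I)^m) = K^(m+1)*w*(K*w*t^(m+1)*I)^m := by ring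

open Real in
/-- Let `k ≥ 2` and let `ω` be the volume of the unit ball in `ℝ^k`. For `θ ∈ (0, π/2)`,
with `A(θ) = k·ω·tan^k θ·∫₀^{π/2-θ} sin^{k-1} φ dφ` and `L(θ) = k·ω·sin^{k-1} θ`, one has
`k^k·ω·A(θ)^{k-1} > L(θ)^k`. -/
theorem stmt9 (k : ℕ) (hk : 2 ≤ k)
    (ω : ℝ) (hω : ω = (MeasureTheory.volume (Metric.ball (0 : EuclideanSpace ℝ (Fin k)) 1)).toReal)
    (θ : ℝ) (hθ0 : 0 < θ) (hθ1 : θ < π / 2)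
    (A L : ℝ)
    (hA : A = (k : ℝ) * ω * Real.tan θ ^ k * ∫ φ in (0 : ℝ)..(π / 2 - θ), Real.sin φ ^ (k - 1))
    (hL : L = (k : ℝ) * ω * Real.sin θ ^ (k - 1)) :
    L ^ k < (k : ℝ) ^ k * ω * A ^ (k - 1) := by
  have hω0 : 0 < ω := by
    rw [hω]
    apply ENNReal.toReal_pos
    · exact (Metric.measure_ball_pos _ _ one_pos).ne'
    · exact (MeasureTheory.measure_ball_lt_top).ne
  obtain ⟨m, rfl⟩ : ∃ m, k = m + 1 := ⟨k - 1, by omega⟩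
  have hm : 1 ≤ m := by omega
  simp only [Nat.add_sub_cancel] at hA hL ⊢
  set I := ∫ φ in (0 : ℝ)..(π / 2 - θ), Real.sin φ ^ m with hI
  have hs : 0 < Real.sin θ := Real.sin_pos_of_pos_of_lt_pi hθ0 (by linarith [Real.pi_pos])
  have hc : 0 < Real.cos θ := Real.cos_pos_of_mem_Ioo ⟨by linarith [Real.pi_pos], hθ1⟩
  have ht : 0 < Real.tan θ := Real.tan_pos_of_pos_of_lt_pi_div_two hθ0 hθ1
  have hIgt : Real.cos θ ^ (m+1) / (m+1) < I := by
    have := key_int m (π/2 - θ) (by linarith) (by linarith)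
    simpa [Real.sin_pi_div_two_sub] using this
  have hI0 : 0 < I := lt_trans (by positivity) hIgt
  have core : Real.sin θ ^ (m+1) < ((m:ℝ)+1) * Real.tan θ ^ (m+1) * I := by
    have h2 := mul_lt_mul_of_pos_left hIgt
      (show (0:ℝ) < ((m:ℝ)+1) * Real.tan θ ^ (m+1) by positivity)
    calc Real.sin θ ^ (m+1)
        = ((m:ℝ)+1) * Real.tan θ ^ (m+1) * (Real.cos θ ^ (m+1) / (m+1)) := by
          rw [Real.tan_eq_sin_div_cos, div_pow]
          field_simp
      _ < _ := h2
  have keypow : (Real.sin θ ^ (m+1)) ^ m < (((m:ℝ)+1) * Real.tan θ ^ (m+1) * I) ^ m :=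
    pow_lt_pow_left₀ core (by positivity) (by omega)
  have hkw : (0:ℝ) < ((m:ℝ)+1) * ω := by positivity
  have cast1 : ((m+1 : ℕ) : ℝ) = (m:ℝ)+1 := by push_cast; ring
  rw [hA, hL, cast1]
  calc (((m:ℝ)+1) * ω * Real.sin θ ^ m) ^ (m+1)
      = (((m:ℝ)+1) * ω) * ((((m:ℝ)+1) * ω) ^ m * (Real.sin θ ^ (m+1)) ^ m) :=
        aux1 _ _ _ _
    _ < (((m:ℝ)+1) * ω) * ((((m:ℝ)+1) * ω) ^ m * (((m:ℝ)+1) * Real.tan θ ^ (m+1) * I) ^ m) :=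
        mul_lt_mul_of_pos_left (mul_lt_mul_of_pos_left keypow (pow_pos hkw m)) hkw
    _ = ((m:ℝ)+1) ^ (m+1) * ω * (((m:ℝ)+1) * ω * Real.tan θ ^ (m+1) * I) ^ m :=
        aux2 _ _ _ _ _
end
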